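/- Let σ be a rational function, holomorphic on the closed lower half-plane, such that |σ'(z)| ≤ 1/(y_1 + |Im z|) for all z with Im z ≤ 0, where y_1 > 0 is fixed. Then for any real x_1 < x_2 with r = x_2 − x_1, one has |σ(x_1) − σ(x_2)| ≤ 2√2 ∫_0^{r/2} dx/(y_1 + r/2 − x) < 3 ln(1 + r/(2 y_1)). -/

import Mathlib

/-!
Join `x₁` and `x₂` through the vertex `v = (x₁ + x₂)/2 - i r/2` of the isosceles right triangle
with hypotenuse `[x₁, x₂]`. Parametrising either leg from its real endpoint as `x + t w` with
`Im w = -1`, `|w| = √2`, `0 ≤ t ≤ r/2`, we have `|Im z| = t`, so the bound on `σ'` gives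
`|σ(v) - σ(x)| ≤ √2 ∫₀^{r/2} dt / (y₁ + t) = √2 log (1 + r / (2 y₁))`. The strict inequality
is `2√2 < 3`.
-/

open Complex
open Set MeasureTheory

lemma integral_one_div_add {c h : ℝ} (hc : 0 < c) (hh : 0 ≤ h) :
    ∫ t in (0 : ℝ)..h, 1 / (c + t) = Real.log (1 + h / c) := by
  rw [intervalIntegral.integral_comp_add_left (fun u => 1 / u) c, add_zero,
    integral_one_div fun h0 => by rcases mem_uIcc.1 h0 with ⟨_, _⟩ | ⟨_, _⟩ <;> linarith]
  congr 1
  field_simp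

lemma integral_one_div_add_sub {c h : ℝ} (hc : 0 < c) (hh : 0 ≤ h) :
    ∫ t in (0 : ℝ)..h, 1 / (c + h - t) = Real.log (1 + h / c) := by
  simp_rw [add_sub_assoc]
  rw [intervalIntegral.integral_comp_sub_left (fun u => 1 / (c + u)) h, sub_self, sub_zero,
    integral_one_div_add hc hh]

section Segment

variable {E : Type*} [NormedAddCommGroup E] [NormedSpace ℂ E]

lemma norm_sub_le_mul_integral_of_norm_deriv_le_on_segment {σ : ℂ → E} {s : Set ℂ}
    {a w : ℂ} {h : ℝ} {B : ℝ → ℝ} (hh : 0 ≤ h) (hσ : DifferentiableOn ℂ σ s)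
    (hs : ∀ t ∈ Icc 0 h, a + t * w ∈ s) (hs' : ∀ t ∈ Ioo 0 h, a + t * w ∈ interior s)
    (hB : ∀ t ∈ Ioo 0 h, ‖deriv σ (a + t * w)‖ ≤ B t) (hBi : IntervalIntegrable B volume 0 h) :
    ‖σ (a + h * w) - σ a‖ ≤ ‖w‖ * ∫ t in (0 : ℝ)..h, B t := by
  have hline (t : ℝ) : HasDerivAt (fun t : ℝ => a + t * w) w t := by
    simpa using ((hasDerivAt_id t).ofReal_comp.mul_const w).const_add a
  have hderiv : ∀ t ∈ Ioo 0 h,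
      HasDerivAt (fun t : ℝ => σ (a + t * w)) (w • deriv σ (a + t * w)) t := fun t ht =>
    (hσ.differentiableAt (mem_interior_iff_mem_nhds.1 (hs' t ht))).hasDerivAt.scomp t (hline t)
  have hcont : ContinuousOn (fun t : ℝ => σ (a + t * w)) (Icc 0 h) :=
    hσ.continuousOn.comp (by fun_prop) hs
  rw [← intervalIntegral.integral_const_mul]
  simpa using norm_sub_le_integral_of_norm_deriv_le_of_le hh hcont
    (fun t ht => (hderiv t ht).differentiableAt.differentiableWithinAt)
    (ae_of_all _ fun t ht => by
      rw [(hderiv t ht).deriv, norm_smul]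
      exact mul_le_mul_of_nonneg_left (hB t ht) (norm_nonneg w))
    (hBi.const_mul ‖w‖)

lemma norm_sub_le_of_descent {σ : ℂ → E} {y₁ : ℝ} (hy₁ : 0 < y₁)
    (hσ : DifferentiableOn ℂ σ {z : ℂ | z.im ≤ 0})
    (hd : ∀ z : ℂ, z.im ≤ 0 → ‖deriv σ z‖ ≤ 1 / (y₁ + |z.im|))
    (x : ℝ) {w : ℂ} (hw : w.im = -1) {h : ℝ} (hh : 0 ≤ h) :
    ‖σ (x + h * w) - σ x‖ ≤ ‖w‖ * Real.log (1 + h / y₁) := by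
  have him (t : ℝ) : ((x : ℂ) + t * w).im = -t := by simp [hw]
  rw [← integral_one_div_add hy₁ hh]
  refine norm_sub_le_mul_integral_of_norm_deriv_le_on_segment hh hσ
    (fun t ht => by simpa [him] using ht.1)
    (fun t ht => by rw [interior_setOfPred_im_le]; simpa [him] using ht.1)
    (fun t ht => ?_) ?_
  · simpa [him, abs_of_pos ht.1] using hd (x + t * w) (by rw [him]; linarith [ht.1])
  · refine (ContinuousOn.div continuousOn_const (by fun_prop) fun t ht => ?_).intervalIntegrable
    rw [uIcc_of_le hh] at ht
    linarith [ht.1]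

end Segment

lemma two_mul_sqrt_two_lt_three : 2 * Real.sqrt 2 < 3 := by
  nlinarith [Real.sq_sqrt (show (0 : ℝ) ≤ 2 by norm_num), Real.sqrt_nonneg 2]

theorem stmt_7 (σ : ℂ → ℂ) (y₁ : ℝ) (hy₁ : 0 < y₁)
    (hσ : DifferentiableOn ℂ σ {z : ℂ | z.im ≤ 0})
    (hd : ∀ z : ℂ, z.im ≤ 0 → ‖deriv σ z‖ ≤ 1 / (y₁ + |z.im|)) :
    ∀ x₁ x₂ : ℝ, x₁ < x₂ →
      ‖σ x₁ - σ x₂‖ ≤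
        2 * Real.sqrt 2 * ∫ x in (0 : ℝ)..((x₂ - x₁) / 2), 1 / (y₁ + (x₂ - x₁) / 2 - x) ∧
      2 * Real.sqrt 2 * (∫ x in (0 : ℝ)..((x₂ - x₁) / 2), 1 / (y₁ + (x₂ - x₁) / 2 - x)) <
        3 * Real.log (1 + (x₂ - x₁) / (2 * y₁)) := by
  intro x₁ x₂ hx
  set h := (x₂ - x₁) / 2 with h_def
  have hh : 0 < h := by linarith
  have hlog : (x₂ - x₁) / (2 * y₁) = h / y₁ := by ring
  rw [integral_one_div_add_sub hy₁ hh.le, hlog]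
  have hleft := norm_sub_le_of_descent hy₁ hσ hd x₁ (w := 1 - I) (by simp) hh.le
  have hright := norm_sub_le_of_descent hy₁ hσ hd x₂ (w := -1 - I) (by simp) hh.le
  have hvertex : (x₂ : ℂ) + h * (-1 - I) = x₁ + h * (1 - I) := by
    rw [h_def]; push_cast; ring
  have hnorm₁ : ‖1 - I‖ = Real.sqrt 2 := by simp [norm_def, normSq_apply]; norm_num
  have hnorm₂ : ‖-1 - I‖ = Real.sqrt 2 := by simp [norm_def, normSq_apply]; norm_num
  rw [hvertex, hnorm₂] at hright
  rw [hnorm₁, norm_sub_rev] at hleft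
  refine ⟨?_, ?_⟩
  · calc ‖σ x₁ - σ x₂‖
        ≤ ‖σ x₁ - σ (x₁ + h * (1 - I))‖ + ‖σ (x₁ + h * (1 - I)) - σ x₂‖ :=
          norm_sub_le_norm_sub_add_norm_sub _ _ _
      _ ≤ 2 * Real.sqrt 2 * Real.log (1 + h / y₁) := by linarith
  · have hpos : 0 < Real.log (1 + h / y₁) := Real.log_pos (by have := div_pos hh hy₁; linarith)
    exact mul_lt_mul_of_pos_right two_mul_sqrt_two_lt_three hpos
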